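/- Assume B is invertible and that (θᵢ, sᵢ, wᵢ) for i = 1, 2 satisfy the harmonic pencil equations with θᵢ ≠ 0, sᵢ ≠ 0 and θ₁² ≠ θ₂² (note wᵢ ≠ 0, since B wᵢ = θᵢ sᵢ ≠ 0 follows from the pencil equations and invertibility of B). Define the harmonic Ritz vectors ũᵢ = P sᵢ/‖sᵢ‖ and ṽᵢ = Q wᵢ/‖wᵢ‖. Then ũ₁ᵀ A ṽ₂ = 0 and ṽ₁ᵀ Aᵀ ũ₂ = 0. -/

import Mathlib

open Matrix

noncomputable def enorm {ι : Type*} [Fintype ι] (v : ι → ℝ) : ℝ :=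
  Real.sqrt (∑ i, v i ^ 2)

def eLast (m : ℕ) : Fin m → ℝ := fun i => if (i : ℕ) = m - 1 then 1 else 0

def HarmonicPencil {m : ℕ} (B : Matrix (Fin m) (Fin m) ℝ) (β θ : ℝ)
    (s w : Fin m → ℝ) : Prop :=
  θ • B.mulVec w = (B * Bᵀ + β ^ 2 • vecMulVec (eLast m) (eLast m)).mulVec s ∧
  θ • Bᵀ.mulVec s = (Bᵀ * B).mulVec w

noncomputable def specNorm {m n : Type*} [Fintype m] [Fintype n] [DecidableEq n]
    (A : Matrix m n ℝ) : ℝ :=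
  ‖LinearMap.toContinuousLinearMap (Matrix.toEuclideanLin A)‖

noncomputable def sep {n : Type*} [Fintype n] [DecidableEq n] (a : ℝ) (G : Matrix n n ℝ) : ℝ :=
  sInf {r | ∃ x : n → ℝ, _root_.enorm x = 1 ∧ r = _root_.enorm ((a • (1 : Matrix n n ℝ) - G).mulVec x)}

noncomputable def sigmaMin {m n : Type*} [Fintype m] [Fintype n] (C : Matrix m n ℝ) : ℝ :=
  sSup {c | 0 ≤ c ∧ ∀ h, c * _root_.enorm h ≤ _root_.enorm (C.mulVec h)}

noncomputable def sinAngleVec {ι : Type*} [Fintype ι] (x y : ι → ℝ) : ℝ :=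
  Real.sqrt (1 - (x ⬝ᵥ y) ^ 2 / (_root_.enorm x ^ 2 * _root_.enorm y ^ 2))

noncomputable def toE {ι : Type*} (v : ι → ℝ) : EuclideanSpace ℝ ι :=
  (WithLp.equiv 2 (ι → ℝ)).symm v

noncomputable def ofE {ι : Type*} (v : EuclideanSpace ℝ ι) : ι → ℝ :=
  WithLp.equiv 2 (ι → ℝ) v

noncomputable def sinAngleSub {ι : Type*} [Fintype ι] (x : EuclideanSpace ℝ ι)
    (E : Submodule ℝ (EuclideanSpace ℝ ι)) : ℝ :=
  ‖x - (E.orthogonalProjectionOnto x : EuclideanSpace ℝ ι)‖ / ‖x‖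

def Atilde {M N : ℕ} (A : Matrix (Fin M) (Fin N) ℝ) :
    Matrix (Fin M ⊕ Fin N) (Fin M ⊕ Fin N) ℝ :=
  fromBlocks 0 A Aᵀ 0

def Btilde {m : ℕ} (B : Matrix (Fin m) (Fin m) ℝ) :
    Matrix (Fin m ⊕ Fin m) (Fin m ⊕ Fin m) ℝ :=
  fromBlocks 0 B Bᵀ 0

noncomputable def Ctilde {m : ℕ} (B : Matrix (Fin m) (Fin m) ℝ) (β : ℝ) :
    Matrix (Fin m ⊕ Fin m) (Fin m ⊕ Fin m) ℝ :=
  fromBlocks (B * Bᵀ + β ^ 2 • vecMulVec (eLast m) (eLast m)) 0 0 (Bᵀ * B)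

noncomputable def colSpanE {M N m : ℕ} (P : Matrix (Fin M) (Fin m) ℝ)
    (Q : Matrix (Fin N) (Fin m) ℝ) : Submodule ℝ (EuclideanSpace ℝ (Fin M ⊕ Fin N)) :=
  Submodule.span ℝ {z | ∃ x y : Fin m → ℝ, z = toE (Sum.elim (P.mulVec x) (Q.mulVec y))}

noncomputable def Mrho {m : ℕ} (B : Matrix (Fin m) (Fin m) ℝ) (β ρ : ℝ) :
    Matrix ((Fin m ⊕ Fin m) ⊕ Unit) (Fin m ⊕ Fin m) ℝ :=
  Matrix.fromRows
    (fromBlocks (-(ρ • (1 : Matrix (Fin m) (Fin m) ℝ))) B Bᵀ (-(ρ • 1)))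
    (Matrix.of fun (_ : Unit) j => Sum.elim (β • eLast m) (0 : Fin m → ℝ) j)
/-! Pairing the pencil equations of one triple with the vectors of the other and using the symmetry
of `C₁` and `C₂` gives, for `a = s₂ ⬝ B w₁` and `b = s₁ ⬝ B w₂`, the relations `θ₁ a = θ₂ b` and
`θ₁ b = θ₂ a`; hence `(θ₁² - θ₂²) a = (θ₁² - θ₂²) b = 0`. Since `Pᵀ A Q = B`, the two bilinear forms
in the theorem are `b` and `a` up to the normalising factors. -/

theorem eq_zero_of_cross_relations {R : Type*} [CommRing R] [IsDomain R] {θ₁ θ₂ a b : R}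
    (hab : θ₁ * a = θ₂ * b) (hba : θ₁ * b = θ₂ * a) (hθ : θ₁ ^ 2 ≠ θ₂ ^ 2) : a = 0 ∧ b = 0 := by
  have hθ' : θ₁ ^ 2 - θ₂ ^ 2 ≠ 0 := sub_ne_zero.mpr hθ
  constructor
  · refine (mul_eq_zero.mp ?_).resolve_left hθ'
    linear_combination θ₁ * hab + θ₂ * hba
  · refine (mul_eq_zero.mp ?_).resolve_left hθ'
    linear_combination θ₁ * hba + θ₂ * hab

namespace Matrix

variable {R : Type*} {m n : Type*} [Fintype m] [Fintype n]

theorem IsSymm.dotProduct_mulVec_comm [CommSemiring R] {C : Matrix n n R} (hC : C.IsSymm)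
    (x y : n → R) : x ⬝ᵥ C *ᵥ y = y ⬝ᵥ C *ᵥ x := by
  simpa only [hC.eq] using dotProduct_transpose_mulVec C x y

theorem dotProduct_mulVec_mul_mulVec {k l : Type*} [Fintype k] [Fintype l] [CommSemiring R]
    (P : Matrix k m R) (A : Matrix k l R) (Q : Matrix l n R) (x : m → R) (y : n → R) :
    P *ᵥ x ⬝ᵥ A *ᵥ (Q *ᵥ y) = x ⬝ᵥ (Pᵀ * A * Q) *ᵥ y := by
  rw [dotProduct_comm, ← dotProduct_transpose_mulVec P x, mulVec_mulVec, mulVec_mulVec]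

theorem dotProduct_mulVec_eq_zero_of_pencil [CommRing R] [IsDomain R] {B : Matrix m n R}
    {C₁ : Matrix m m R} {C₂ : Matrix n n R} (hC₁ : C₁.IsSymm) (hC₂ : C₂.IsSymm)
    {θ₁ θ₂ : R} {s₁ s₂ : m → R} {w₁ w₂ : n → R}
    (hs₁ : θ₁ • B *ᵥ w₁ = C₁ *ᵥ s₁) (hw₁ : θ₁ • Bᵀ *ᵥ s₁ = C₂ *ᵥ w₁)
    (hs₂ : θ₂ • B *ᵥ w₂ = C₁ *ᵥ s₂) (hw₂ : θ₂ • Bᵀ *ᵥ s₂ = C₂ *ᵥ w₂)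
    (hθ : θ₁ ^ 2 ≠ θ₂ ^ 2) :
    s₁ ⬝ᵥ B *ᵥ w₂ = 0 ∧ s₂ ⬝ᵥ B *ᵥ w₁ = 0 := by
  have hab : θ₁ * (s₂ ⬝ᵥ B *ᵥ w₁) = θ₂ * (s₁ ⬝ᵥ B *ᵥ w₂) := by
    rw [← smul_eq_mul, ← dotProduct_smul, hs₁, ← smul_eq_mul, ← dotProduct_smul, hs₂,
      hC₁.dotProduct_mulVec_comm]
  have hba : θ₁ * (s₁ ⬝ᵥ B *ᵥ w₂) = θ₂ * (s₂ ⬝ᵥ B *ᵥ w₁) := by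
    rw [← dotProduct_transpose_mulVec B w₂ s₁, ← dotProduct_transpose_mulVec B w₁ s₂,
      ← smul_eq_mul, ← dotProduct_smul, hw₁, ← smul_eq_mul, ← dotProduct_smul, hw₂,
      hC₂.dotProduct_mulVec_comm]
  exact eq_zero_of_cross_relations hba hab hθ

end Matrix

theorem HarmonicPencil.dotProduct_mulVec_eq_zero {m : ℕ} {B : Matrix (Fin m) (Fin m) ℝ}
    {β θ₁ θ₂ : ℝ} {s₁ w₁ s₂ w₂ : Fin m → ℝ} (h₁ : HarmonicPencil B β θ₁ s₁ w₁)
    (h₂ : HarmonicPencil B β θ₂ s₂ w₂) (hθ : θ₁ ^ 2 ≠ θ₂ ^ 2) :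
    s₁ ⬝ᵥ B *ᵥ w₂ = 0 ∧ s₂ ⬝ᵥ B *ᵥ w₁ = 0 := by
  have hC₁ : (B * Bᵀ + β ^ 2 • vecMulVec (eLast m) (eLast m)).IsSymm :=
    (isSymm_mul_transpose_self B).add (IsSymm.smul (transpose_vecMulVec _ _) _)
  exact dotProduct_mulVec_eq_zero_of_pencil hC₁ (isSymm_transpose_mul_self B)
    h₁.1 h₁.2 h₂.1 h₂.2 hθ

theorem stmt2_general (m M N : ℕ)
    (A : Matrix (Fin M) (Fin N) ℝ)
    (P : Matrix (Fin M) (Fin m) ℝ) (Q : Matrix (Fin N) (Fin m) ℝ)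
    (B : Matrix (Fin m) (Fin m) ℝ) (hPAQ : Pᵀ * A * Q = B)
    (β θ₁ θ₂ : ℝ) (s₁ w₁ s₂ w₂ : Fin m → ℝ)
    (h1 : HarmonicPencil B β θ₁ s₁ w₁) (h2 : HarmonicPencil B β θ₂ s₂ w₂)
    (hθ : θ₁ ^ 2 ≠ θ₂ ^ 2) :
    ((_root_.enorm s₁)⁻¹ • P.mulVec s₁) ⬝ᵥ A.mulVec ((_root_.enorm w₂)⁻¹ • Q.mulVec w₂) = 0 ∧
    ((_root_.enorm w₁)⁻¹ • Q.mulVec w₁) ⬝ᵥ Aᵀ.mulVec ((_root_.enorm s₂)⁻¹ • P.mulVec s₂) = 0 := by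
  obtain ⟨h₁₂, h₂₁⟩ := h1.dotProduct_mulVec_eq_zero h2 hθ
  have hA : ∀ x y, P *ᵥ x ⬝ᵥ A *ᵥ (Q *ᵥ y) = x ⬝ᵥ B *ᵥ y := fun x y => by
    rw [dotProduct_mulVec_mul_mulVec, hPAQ]
  simp only [mulVec_smul, smul_dotProduct, dotProduct_smul, dotProduct_transpose_mulVec, hA,
    h₁₂, h₂₁, smul_zero, and_self]

theorem stmt2 (m M N : ℕ) (hm : 0 < m)
    (A : Matrix (Fin M) (Fin N) ℝ)
    (P : Matrix (Fin M) (Fin m) ℝ) (Q : Matrix (Fin N) (Fin m) ℝ)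
    (hP : Pᵀ * P = 1) (hQ : Qᵀ * Q = 1)
    (B : Matrix (Fin m) (Fin m) ℝ) (hPAQ : Pᵀ * A * Q = B) (hB : IsUnit B)
    (β θ₁ θ₂ : ℝ) (s₁ w₁ s₂ w₂ : Fin m → ℝ)
    (h1 : HarmonicPencil B β θ₁ s₁ w₁) (h2 : HarmonicPencil B β θ₂ s₂ w₂)
    (hθ1 : θ₁ ≠ 0) (hθ2 : θ₂ ≠ 0) (hs1 : s₁ ≠ 0) (hs2 : s₂ ≠ 0)
    (hθ : θ₁ ^ 2 ≠ θ₂ ^ 2) :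
    ((_root_.enorm s₁)⁻¹ • P.mulVec s₁) ⬝ᵥ A.mulVec ((_root_.enorm w₂)⁻¹ • Q.mulVec w₂) = 0 ∧
    ((_root_.enorm w₁)⁻¹ • Q.mulVec w₁) ⬝ᵥ Aᵀ.mulVec ((_root_.enorm s₂)⁻¹ • P.mulVec s₂) = 0 :=
  stmt2_general m M N A P Q B hPAQ β θ₁ θ₂ s₁ w₁ s₂ w₂ h1 h2 hθ
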